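/- There is an absolute constant C > 0 such that the following holds. Let T ≥ 2, 1 ≤ M ≤ T, c > 1, and an integer k ≥ 2 with c ≤ √(T/M). Then for every real t with |t − T| ≤ M, one has |h^♯(t) − 1| ≤ C · (c^{−2k} + M/T). In particular h^♯ is exponentially close to 1 on the window [T − M, T + M]. -/

import Mathlib

/-- `Φ_{k,c}(z) := exp(−(z/c)^{2k})`. -/
noncomputable def Phi (k : ℕ) (c : ℝ) (z : ℂ) : ℂ :=
  Complex.exp (-((z / (c : ℂ)) ^ (2 * k)))

/-- The almost-flat window
`h^♯(z) = ((z² + 1/4)/(T² + 1/4)) · (Φ_{k,c}((z−T)/M) + Φ_{k,c}((z+T)/M))`. -/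
noncomputable def hSharp (T M c : ℝ) (k : ℕ) (z : ℂ) : ℂ :=
  ((z ^ 2 + 1 / 4) / ((T : ℂ) ^ 2 + 1 / 4)) *
    (Phi k c ((z - (T : ℂ)) / (M : ℂ)) + Phi k c ((z + (T : ℂ)) / (M : ℂ)))

/-!
On the real line `h^♯(t) = R(t) · (E₋(t) + E₊(t))`, where `R(t) = (t² + 1/4)/(T² + 1/4)` and
`E_±(t) = exp(-((t ± T)/(M c))^{2k})`. In the window `|t - T| ≤ M`:
* `|R(t) - 1| ≤ 3M/T`, since `t² - T² = (t - T)(t + T)`;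
* `0 ≤ 1 - E₋(t) ≤ ((t - T)/(M c))^{2k} ≤ c^{-2k}`, by `1 - y ≤ e^{-y}`;
* `(t + T)/(M c) ≥ (T/M)/c ≥ √(T/M)` because `c ≤ √(T/M)`, so the exponent of `E₊` is at least
  `(T/M)^k ≥ T/M` and `E₊(t) ≤ e^{-T/M} ≤ M/T`.
Since `E₋ + E₊ ∈ [0, 2]`, `|h^♯(t) - 1| ≤ 2|R - 1| + |E₋ - 1| + E₊ ≤ 10 (c^{-2k} + M/T)`.
-/

open Real

lemma Phi_ofReal (k : ℕ) (c x : ℝ) : Phi k c x = (exp (-(x / c) ^ (2 * k)) : ℝ) := by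
  rw [Phi, Complex.ofReal_exp]
  push_cast
  ring_nf

lemma hSharp_ofReal (T M c : ℝ) (k : ℕ) (t : ℝ) :
    hSharp T M c k t = ((t ^ 2 + 1 / 4) / (T ^ 2 + 1 / 4) *
      (exp (-((t - T) / M / c) ^ (2 * k)) + exp (-((t + T) / M / c) ^ (2 * k))) : ℝ) := by
  have hsub : ((t : ℂ) - T) / M = ((t - T) / M : ℝ) := by push_cast; rfl
  have hadd : ((t : ℂ) + T) / M = ((t + T) / M : ℝ) := by push_cast; rfl
  rw [hSharp, hsub, hadd, Phi_ofReal, Phi_ofReal]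
  push_cast
  ring

lemma exp_neg_even_pow_le_one (x : ℝ) (k : ℕ) : exp (-x ^ (2 * k)) ≤ 1 :=
  exp_le_one_iff.mpr (neg_nonpos.mpr ((even_two_mul k).pow_nonneg x))

lemma abs_exp_neg_div_pow_sub_one_le {x c : ℝ} (hc : 0 < c) (hx : |x| ≤ 1) (k : ℕ) :
    |exp (-(x / c) ^ (2 * k)) - 1| ≤ (c ^ (2 * k))⁻¹ := by
  have hpow : (x / c) ^ (2 * k) ≤ (c ^ (2 * k))⁻¹ := by
    rw [← inv_pow, ← (even_two_mul k).pow_abs]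
    gcongr
    rw [abs_div, abs_of_pos hc, div_eq_mul_inv]
    exact mul_le_of_le_one_left (inv_nonneg.mpr hc.le) hx
  rw [abs_sub_comm, abs_of_nonneg (sub_nonneg.mpr (exp_neg_even_pow_le_one _ k))]
  linarith [one_sub_le_exp_neg ((x / c) ^ (2 * k))]

lemma exp_neg_le_inv {s : ℝ} (hs : 0 < s) : exp (-s) ≤ s⁻¹ := by
  rw [exp_neg]
  exact inv_anti₀ hs (by linarith [add_one_le_exp s])

lemma le_div_pow_two_mul {s b c : ℝ} {k : ℕ} (hs : 1 ≤ s) (hc : 0 < c) (hcs : c ≤ √s)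
    (hsb : s ≤ b) (hk : k ≠ 0) : s ≤ (b / c) ^ (2 * k) := by
  have hsqrt : √s ≤ b / c := by
    rw [le_div_iff₀ hc]
    calc √s * c ≤ √s * √s := by gcongr
      _ = s := mul_self_sqrt (by linarith)
      _ ≤ b := hsb
  calc s ≤ s ^ k := le_self_pow₀ hs hk
    _ = √s ^ (2 * k) := by rw [pow_mul, sq_sqrt (by linarith)]
    _ ≤ (b / c) ^ (2 * k) := by gcongr

lemma exp_neg_div_pow_le_inv {s b c : ℝ} {k : ℕ} (hs : 1 ≤ s) (hc : 0 < c) (hcs : c ≤ √s)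
    (hsb : s ≤ b) (hk : k ≠ 0) : exp (-(b / c) ^ (2 * k)) ≤ s⁻¹ :=
  (exp_le_exp.mpr (neg_le_neg (le_div_pow_two_mul hs hc hcs hsb hk))).trans
    (exp_neg_le_inv (by linarith))

lemma abs_div_sq_add_sub_one_le {t T M : ℝ} (hT : 0 < T) (hMT : M ≤ T) (ht : |t - T| ≤ M) :
    |(t ^ 2 + 1 / 4) / (T ^ 2 + 1 / 4) - 1| ≤ 3 * (M / T) := by
  have hM : 0 ≤ M := (abs_nonneg _).trans ht
  have hq : 0 < T ^ 2 + 1 / 4 := by positivity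
  have hsum : |t + T| ≤ 3 * T := abs_le.mpr (by constructor <;> linarith [abs_le.mp ht])
  rw [div_sub_one hq.ne', abs_div, abs_of_pos hq, div_le_iff₀ hq]
  calc |t ^ 2 + 1 / 4 - (T ^ 2 + 1 / 4)| = |t - T| * |t + T| := by rw [← abs_mul]; ring_nf
    _ ≤ M * (3 * T) := mul_le_mul ht hsum (abs_nonneg _) hM
    _ ≤ 3 * M * T + 3 * M / (4 * T) := by
      linarith [div_nonneg (by linarith : 0 ≤ 3 * M) (by linarith : 0 ≤ 4 * T)]
    _ = 3 * (M / T) * (T ^ 2 + 1 / 4) := by field_simp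

lemma abs_mul_add_sub_one_le {R E₁ E₂ : ℝ} (h₁ : 0 ≤ E₁) (h₁' : E₁ ≤ 1) (h₂ : 0 ≤ E₂)
    (h₂' : E₂ ≤ 1) : |R * (E₁ + E₂) - 1| ≤ 2 * |R - 1| + |E₁ - 1| + E₂ := by
  have hprod : |(R - 1) * (E₁ + E₂)| ≤ 2 * |R - 1| := by
    rw [abs_mul, abs_of_nonneg (add_nonneg h₁ h₂), mul_comm]
    exact mul_le_mul_of_nonneg_right (by linarith) (abs_nonneg _)
  calc |R * (E₁ + E₂) - 1| = |(R - 1) * (E₁ + E₂) + (E₁ - 1) + E₂| := by ring_nf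
    _ ≤ |(R - 1) * (E₁ + E₂)| + |E₁ - 1| + |E₂| := abs_add_three _ _ _
    _ ≤ 2 * |R - 1| + |E₁ - 1| + E₂ := by rw [abs_of_nonneg h₂]; linarith

/-- There is an absolute `C > 0` such that for `T ≥ 2`, `1 ≤ M ≤ T`, `c > 1`,
`k ≥ 2` with `c ≤ √(T/M)`, and every real `t` with `|t − T| ≤ M`:
`|h^♯(t) − 1| ≤ C · (c^{−2k} + M/T)`. -/
theorem stmt_12 :
    ∃ C : ℝ, 0 < C ∧
      ∀ (T M c : ℝ) (k : ℕ) (t : ℝ), 2 ≤ T → 1 ≤ M → M ≤ T → 1 < c → 2 ≤ k →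
        c ≤ Real.sqrt (T / M) → |t - T| ≤ M →
        ‖hSharp T M c k (t : ℂ) - 1‖ ≤ C * ((c ^ (2 * k))⁻¹ + M / T) := by
  refine ⟨10, by norm_num, fun T M c k t hT hM hMT hc hk hcT ht => ?_⟩
  have hT0 : 0 < T := by linarith
  have hM0 : 0 < M := by linarith
  have hE₁ : |exp (-((t - T) / M / c) ^ (2 * k)) - 1| ≤ (c ^ (2 * k))⁻¹ :=
    abs_exp_neg_div_pow_sub_one_le (by linarith)
      (by rw [abs_div, abs_of_pos hM0]; exact div_le_one_of_le₀ ht hM0.le) k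
  have hE₂ : exp (-((t + T) / M / c) ^ (2 * k)) ≤ M / T := by
    rw [← inv_div T M]
    have hTt : T / M ≤ (t + T) / M :=
      div_le_div_of_nonneg_right (by linarith [abs_le.mp ht]) hM0.le
    exact exp_neg_div_pow_le_inv ((one_le_div hM0).mpr hMT) (by linarith) hcT hTt
      (by omega : k ≠ 0)
  have hR := abs_div_sq_add_sub_one_le hT0 hMT ht
  have hMT' : M / T ≤ 1 := (div_le_one hT0).mpr hMT
  rw [hSharp_ofReal, ← Complex.ofReal_one, ← Complex.ofReal_sub, Complex.norm_real,
    Real.norm_eq_abs]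
  calc _ ≤ _ := abs_mul_add_sub_one_le (exp_pos _).le (exp_neg_even_pow_le_one _ k)
        (exp_pos _).le (hE₂.trans hMT')
    _ ≤ 10 * ((c ^ (2 * k))⁻¹ + M / T) := by
      linarith [inv_nonneg.mpr (pow_nonneg (by linarith : (0 : ℝ) ≤ c) (2 * k)),
        div_nonneg hM0.le hT0.le]
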